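/- For any map φ: Σ → Diff(M) such that ev_u∘φ is smooth for all u, the inequality ∫_Σ max_u ‖∂̄(ev_u∘φ)‖² dVol_Σ ≤ ℰ(φ,ω,J) − ⟨(ev_u∘φ)*[ω],[Σ]⟩ holds, where ℰ(φ,ω,J) = ∫_Σ ½ max_u ‖d(ev_u∘φ)‖² dVol_Σ + ∫_Σ (max_u Λ_u − min_u Λ_u) dVol_Σ and Λ_u is defined by (ev_u∘φ)*ω = Λ_u dVol_Σ. -/
import Mathlib


open MeasureTheory

/-!
Model as in the paper's Lemma on the evaluation energy.  `SS = Σ` is a closed Riemann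
surface realized as a measure space with fixed conformal metric and volume `μ`; the
tangent plane is `ℝ × ℝ` with the standard complex structure `iE` and orthonormal
basis `e₁,e₂`.  `M` is the (compact) manifold of base points, `F` the trivialized
tangent space of `M`, `ω` the symplectic form, `J ∈ J_ω`.  For each `u ∈ M`,
`du u z` is the differential of `ev_u∘φ` at `z`; `nsq` is the Hilbert–Schmidt norm
squared w.r.t. `g = ω(·,J·)`; `∂̄(ev_u∘φ) = ½(d(ev_u∘φ) + J∘d(ev_u∘φ)∘i_Σ)`;
`Λ u z = ω(du u z e₁, du u z e₂)` is defined by `(ev_u∘φ)^*ω = Λ_u dVol`, and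
`⟨(ev_u∘φ)^*[ω],[Σ]⟩ = ∫ Λ_u dμ`, independent of `u` (all the maps `ev_u∘φ` are
homotopic); it is computed at a fixed base point `u₀`.
-/

noncomputable def iE : (ℝ × ℝ) →ₗ[ℝ] (ℝ × ℝ) :=
  LinearMap.prod (-(LinearMap.snd ℝ ℝ ℝ)) (LinearMap.fst ℝ ℝ ℝ)

/-- For any `φ : Σ → Diff(M)` with `ev_u∘φ` smooth,
`∫ max_u ‖∂̄(ev_u∘φ)‖² dVol ≤ ℰ(φ,ω,J) − ⟨(ev_u∘φ)^*[ω],[Σ]⟩`, where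
`ℰ(φ,ω,J) = ∫ ½ max_u ‖d(ev_u∘φ)‖² dVol + ∫ (max_u Λ_u − min_u Λ_u) dVol`. -/
theorem evaluation_energy_inequality
    (SS : Type*) [MeasurableSpace SS] (μ : Measure SS)
    (M : Type*) [Nonempty M]
    (F : Type*) [AddCommGroup F] [Module ℝ F]
    (ω : F →ₗ[ℝ] F →ₗ[ℝ] ℝ) (J : F →ₗ[ℝ] F)
    (hskew : ∀ x y : F, ω x y = - ω y x)
    (hinv : ∀ x y : F, ω (J x) (J y) = ω x y)
    (htame : ∀ x : F, x ≠ 0 → 0 < ω x (J x))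
    (hJ : J ∘ₗ J = - LinearMap.id)
    (du : M → SS → ((ℝ × ℝ) →ₗ[ℝ] F))          -- `du u z = d(ev_u∘φ)(z)`
    (nsq : ((ℝ × ℝ) →ₗ[ℝ] F) → ℝ)              -- Hilbert–Schmidt norm² w.r.t. ω(·,J·)
    (hnsq : ∀ A : (ℝ × ℝ) →ₗ[ℝ] F,
      nsq A = ω (A (1, 0)) (J (A (1, 0))) + ω (A (0, 1)) (J (A (0, 1))))
    (dbar : M → SS → ((ℝ × ℝ) →ₗ[ℝ] F))        -- `∂̄(ev_u∘φ)`
    (hdbar : ∀ u z, dbar u z = (1 / 2 : ℝ) • (du u z + J ∘ₗ du u z ∘ₗ iE))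
    (Λ : M → SS → ℝ)                            -- `(ev_u∘φ)^*ω = Λ_u dVol`
    (hΛ : ∀ u z, Λ u z = ω (du u z (1, 0)) (du u z (0, 1)))
    -- boundedness of the families (automatic for compact `M`)
    (hbb1 : ∀ z, BddAbove (Set.range fun u => nsq (dbar u z)))
    (hbb2 : ∀ z, BddAbove (Set.range fun u => nsq (du u z)))
    (hbb3 : ∀ z, BddAbove (Set.range fun u => Λ u z))
    (hbb4 : ∀ z, BddBelow (Set.range fun u => Λ u z))
    -- the base point at which `⟨(ev_u∘φ)^*[ω],[Σ]⟩` is computed, and its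
    -- independence of the base point
    (u₀ : M) (hpair : ∀ u : M, ∫ z, Λ u z ∂μ = ∫ z, Λ u₀ z ∂μ)
    -- integrability of all densities
    (hint1 : Integrable (fun z => ⨆ u, nsq (dbar u z)) μ)
    (hint2 : Integrable (fun z => (1 / 2) * ⨆ u, nsq (du u z)) μ)
    (hint3 : Integrable (fun z => (⨆ u, Λ u z) - ⨅ u, Λ u z) μ)
    (hint4 : Integrable (fun z => Λ u₀ z) μ) :
    ∫ z, (⨆ u, nsq (dbar u z)) ∂μ ≤
      ((∫ z, (1 / 2) * (⨆ u, nsq (du u z)) ∂μ) +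
        ∫ z, ((⨆ u, Λ u z) - ⨅ u, Λ u z) ∂μ) -
        ∫ z, Λ u₀ z ∂μ := by

  -- pointwise energy identity: ‖∂̄‖² = ½‖d‖² − Λ
  have hJJ : ∀ x : F, J (J x) = -x := by
    intro x
    have := congrArg (fun L => L x) hJ
    simpa using this
  have key : ∀ u z, nsq (dbar u z) = (1 / 2) * nsq (du u z) - Λ u z := by
    intro u z
    set a := du u z (1, 0) with ha
    set b := du u z (0, 1) with hb
    have h10 : dbar u z (1, 0) = (1 / 2 : ℝ) • (a + J b) := by
      rw [hdbar]
      simp [iE, ha, hb]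
    have h01 : dbar u z (0, 1) = (1 / 2 : ℝ) • (b - J a) := by
      rw [hdbar]
      have : du u z (-1, 0) = -a := by
        have : ((-1, 0) : ℝ × ℝ) = -(1, 0) := by simp
        rw [this, map_neg]
      simp [iE, this, hb, sub_eq_add_neg]
    rw [hnsq, hnsq, hΛ, h10, h01, ← ha, ← hb]
    have e1 : ω ((1 / 2 : ℝ) • (a + J b)) (J ((1 / 2 : ℝ) • (a + J b)))
        = (1 / 4) * (ω a (J a) + ω b (J b) - 2 * ω a b) := by
      simp only [_root_.map_smul, map_add, LinearMap.smul_apply, LinearMap.add_apply,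
        smul_eq_mul, hJJ]
      have h1 : ω (J b) (J a) = - ω a b := by rw [hinv, hskew]
      have h2 : ω (J b) (-b) = ω b (J b) := by
        rw [map_neg]; rw [hskew (J b) b]; ring
      rw [map_neg, h1, h2]; ring
    have e2 : ω ((1 / 2 : ℝ) • (b - J a)) (J ((1 / 2 : ℝ) • (b - J a)))
        = (1 / 4) * (ω a (J a) + ω b (J b) - 2 * ω a b) := by
      simp only [_root_.map_smul, map_sub, LinearMap.smul_apply, LinearMap.sub_apply,
        smul_eq_mul, hJJ]
      have h1 : ω (J a) (J b) = ω a b := hinv a b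
      have h2 : ω b (-a) = ω a b := by rw [map_neg, hskew b a]; ring
      have h3 : ω (J a) (-a) = ω a (J a) := by
        rw [map_neg]; rw [hskew (J a) a]; ring
      rw [h1, h2, h3]; ring
    rw [e1, e2]; ring
  -- pointwise bound on the sup
  have hpt : ∀ z, (⨆ u, nsq (dbar u z)) ≤
      (1 / 2) * (⨆ u, nsq (du u z)) + ((⨆ u, Λ u z) - ⨅ u, Λ u z) - Λ u₀ z := by
    intro z
    apply ciSup_le
    intro u
    rw [key u z]
    have h1 : nsq (du u z) ≤ ⨆ u, nsq (du u z) := le_ciSup (hbb2 z) u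
    have h2 : (⨅ u, Λ u z) ≤ Λ u z := ciInf_le (hbb4 z) u
    have h3 : Λ u₀ z ≤ ⨆ u, Λ u z := le_ciSup (hbb3 z) u₀
    nlinarith
  have hRHS : ((∫ z, (1 / 2) * (⨆ u, nsq (du u z)) ∂μ) +
        ∫ z, ((⨆ u, Λ u z) - ⨅ u, Λ u z) ∂μ) - ∫ z, Λ u₀ z ∂μ
      = ∫ z, ((1 / 2) * (⨆ u, nsq (du u z)) + ((⨆ u, Λ u z) - ⨅ u, Λ u z) - Λ u₀ z) ∂μ := by
    rw [← integral_add hint2 hint3]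
    rw [← integral_sub (show Integrable
      (fun z => (1 / 2) * (⨆ u, nsq (du u z)) + ((⨆ u, Λ u z) - ⨅ u, Λ u z)) μ
      from hint2.add hint3) hint4]
  rw [hRHS]
  exact integral_mono hint1 ((hint2.add hint3).sub hint4) hpt
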